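/- arXiv:2407.17804 — 2 statements merged into one kernel-verified Lean document; each statement's English description precedes it below -/
import Mathlib

section
/- For the Gaussian kernel K̃(r) = σ² exp(−φ r²) in ℝ² with σ², φ > 0, the 2×2 cross-covariance matrix of the joint (gradient, curvature) wombling measures over a unit-direction segment of length t* is diagonal: V_Γ(t*) = 2σ²√π φ^{1/2} t* (2Φ(√(2φ) t*) − 1) · diag(1, 6φ), where Φ is the standard normal CDF. In particular the off-diagonal covariances k₁₂ = k₂₁ = 0. -/
open MeasureTheory
open scoped RealInnerProductSpace

/-- The standard normal cumulative distribution function. -/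
noncomputable def stdNormalCDF (x : ℝ) : ℝ :=
  ∫ t in Set.Iic x, Real.exp (-(t ^ 2) / 2) / Real.sqrt (2 * Real.pi)

/-!
Since `u ⊥ u⊥`, the kernel factorises along the normal direction,
`K(x u + t u⊥) = σ² e^{-φx²} e^{-φt²}`, so the `n`-th derivative of `K` in direction `u⊥` at `x u`
is `σ² e^{-φx²}` times the `n`-th derivative at `0` of the one-dimensional Gaussian `e^{-φt²}`.
Through the Hermite polynomials the latter is `-2φ`, `0`, `12φ²` for `n = 2, 3, 4`, and the
remaining integral `∫_{-t*}^{t*} e^{-φx²} dx` is `√(π/φ) (2Φ(√(2φ) t*) - 1)` after the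
substitution `y = √(2φ) x`.
-/

open Set Real Polynomial ProbabilityTheory

theorem iteratedDeriv_exp_neg_mul_sq_zero {φ : ℝ} (hφ : 0 ≤ φ) (n : ℕ) :
    iteratedDeriv n (fun t => exp (-(φ * t ^ 2))) 0 = (-√(2 * φ)) ^ n * (hermite n).coeff 0 := by
  have hscale : (fun t => exp (-(φ * t ^ 2))) = fun t => exp (-((√(2 * φ) * t) ^ 2 / 2)) := by
    funext t
    rw [mul_pow, sq_sqrt (by positivity)]
    ring_nf
  rw [hscale, iteratedDeriv_comp_const_mul (f := fun y => exp (-(y ^ 2 / 2))) (by fun_prop)]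
  beta_reduce
  rw [iteratedDeriv_eq_iterate, deriv_gaussian_eq_hermite_mul_gaussian, mul_zero, ← coeff_zero_eq_aeval_zero', algebraMap_int_eq, eq_intCast, neg_pow,
    zero_pow two_ne_zero, zero_div, neg_zero, exp_zero, mul_one]
  ring

theorem iteratedDeriv_exp_neg_mul_sq_zero_of_odd {φ : ℝ} (hφ : 0 ≤ φ) {n : ℕ} (hn : Odd n) :
    iteratedDeriv n (fun t => exp (-(φ * t ^ 2))) 0 = 0 := by
  rw [iteratedDeriv_exp_neg_mul_sq_zero hφ, coeff_hermite_of_odd_add (by simpa using hn)]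
  simp

theorem iteratedDeriv_two_mul_exp_neg_mul_sq_zero {φ : ℝ} (hφ : 0 ≤ φ) (k : ℕ) :
    iteratedDeriv (2 * k) (fun t => exp (-(φ * t ^ 2))) 0
      = (-(2 * φ)) ^ k * (2 * k - 1).doubleFactorial := by
  rw [iteratedDeriv_exp_neg_mul_sq_zero hφ, ← add_zero (2 * k), coeff_hermite_explicit, add_zero,
    Nat.choose_zero_right, pow_mul, neg_sq, sq_sqrt (by positivity), neg_pow (2 * φ)]
  push_cast
  ring

theorem iteratedFDeriv_apply_const_eq_iteratedDeriv_line {E F : Type*} [NormedAddCommGroup E]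
    [NormedSpace ℝ E] [NormedAddCommGroup F] [NormedSpace ℝ F] {f : E → F} {n : ℕ}
    (hf : ContDiff ℝ n f) (p v : E) :
    iteratedFDeriv ℝ n f p (fun _ => v) = iteratedDeriv n (fun t : ℝ => f (p + t • v)) 0 := by
  have hline : (fun t : ℝ => f (p + t • v))
      = (fun y => f (p + y)) ∘ ContinuousLinearMap.toSpanSingleton ℝ v := rfl
  rw [iteratedDeriv_eq_iteratedFDeriv, hline,
    ContinuousLinearMap.iteratedFDeriv_comp_right (f := fun y => f (p + y)) _
      (hf.comp (contDiff_const.add contDiff_id)) _ le_rfl]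
  simp [iteratedFDeriv_comp_add_left]

theorem iteratedFDeriv_gaussianKernel_apply_orthogonal {E : Type*} [NormedAddCommGroup E]
    [InnerProductSpace ℝ E] (σ2 φ : ℝ) {p w : E} (hw : ‖w‖ = 1) (hpw : ⟪p, w⟫ = 0) (n : ℕ) :
    iteratedFDeriv ℝ n (fun Δ => σ2 * exp (-(φ * ‖Δ‖ ^ 2))) p (fun _ => w)
      = σ2 * exp (-(φ * ‖p‖ ^ 2)) * iteratedDeriv n (fun t => exp (-(φ * t ^ 2))) 0 := by
  have hsplit : (fun t : ℝ => σ2 * exp (-(φ * ‖p + t • w‖ ^ 2)))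
      = fun t => σ2 * exp (-(φ * ‖p‖ ^ 2)) * exp (-(φ * t ^ 2)) := by
    funext t
    rw [norm_add_sq_real, inner_smul_right, hpw, norm_smul, hw, mul_assoc, ← exp_add]
    simp only [Real.norm_eq_abs, sq_abs, mul_one, mul_zero]
    ring_nf
  have hK : ContDiff ℝ n fun Δ : E => σ2 * exp (-(φ * ‖Δ‖ ^ 2)) :=
    contDiff_const.mul ((contDiff_const.mul (contDiff_norm_sq ℝ)).neg).exp
  rw [iteratedFDeriv_apply_const_eq_iteratedDeriv_line hK, hsplit,
    iteratedDeriv_const_mul_field]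

theorem stdNormalCDF_eq_integral_gaussianPDFReal (x : ℝ) :
    stdNormalCDF x = ∫ t in Iic x, gaussianPDFReal 0 1 t := by
  simp [stdNormalCDF, gaussianPDFReal, div_eq_inv_mul]

theorem stdNormalCDF_neg (x : ℝ) : stdNormalCDF (-x) = 1 - stdNormalCDF x := by
  have hint := (integrable_gaussianPDFReal 0 1).integrableOn (s := Iic x)
  rw [← integral_gaussianPDFReal_eq_one 0 one_ne_zero, ← intervalIntegral.integral_Iic_add_Ioi
    hint (integrable_gaussianPDFReal 0 1).integrableOn, stdNormalCDF_eq_integral_gaussianPDFReal,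
    stdNormalCDF_eq_integral_gaussianPDFReal, ← integral_comp_neg_Ioi]
  simp [gaussianPDFReal]

theorem two_mul_stdNormalCDF_sub_one (x : ℝ) :
    2 * stdNormalCDF x - 1 = ∫ t in -x..x, gaussianPDFReal 0 1 t := by
  rw [← intervalIntegral.integral_Iic_sub_Iic (integrable_gaussianPDFReal 0 1).integrableOn
    (integrable_gaussianPDFReal 0 1).integrableOn, ← stdNormalCDF_eq_integral_gaussianPDFReal,
    ← stdNormalCDF_eq_integral_gaussianPDFReal, stdNormalCDF_neg]
  ring

theorem intervalIntegral_exp_neg_mul_sq {φ : ℝ} (hφ : 0 < φ) (b : ℝ) :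
    ∫ x in -b..b, exp (-(φ * x ^ 2))
      = √π / √φ * (2 * stdNormalCDF (√(2 * φ) * b) - 1) := by
  have hpdf : ∀ x, gaussianPDFReal 0 1 (√(2 * φ) * x) = (√(2 * π))⁻¹ * exp (-(φ * x ^ 2)) := by
    intro x
    rw [gaussianPDFReal, sub_zero, NNReal.coe_one, mul_one, mul_one, mul_pow,
      sq_sqrt (by positivity)]
    ring_nf
  rw [two_mul_stdNormalCDF_sub_one, ← mul_neg, ← intervalIntegral.smul_integral_comp_mul_left]
  simp only [hpdf, intervalIntegral.integral_const_mul, smul_eq_mul]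
  rw [sqrt_mul zero_le_two, sqrt_mul zero_le_two]
  field_simp

theorem gaussian_wombling_covariance_matrix_general
    (s2 φ tstar : ℝ) (hφ : 0 < φ)
    (u uperp : EuclideanSpace ℝ (Fin 2)) (hu : ‖u‖ = 1) (huperp : ‖uperp‖ = 1)
    (horth : ⟪u, uperp⟫ = 0)
    (K : EuclideanSpace ℝ (Fin 2) → ℝ)
    (hK : ∀ Δ, K Δ = s2 * Real.exp (-(φ * ‖Δ‖ ^ 2))) :
    ((-1:ℝ) ^ 1 * tstar * ∫ x in (-tstar)..tstar,
        iteratedFDeriv ℝ (1 + 1) K (x • u) (fun _ => uperp))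
      = 2 * s2 * Real.sqrt Real.pi * Real.sqrt φ * tstar *
          (2 * stdNormalCDF (Real.sqrt (2 * φ) * tstar) - 1) ∧
    ((-1:ℝ) ^ 2 * tstar * ∫ x in (-tstar)..tstar,
        iteratedFDeriv ℝ (2 + 2) K (x • u) (fun _ => uperp))
      = 2 * s2 * Real.sqrt Real.pi * Real.sqrt φ * tstar *
          (2 * stdNormalCDF (Real.sqrt (2 * φ) * tstar) - 1) * (6 * φ) ∧
    ((-1:ℝ) ^ 1 * tstar * ∫ x in (-tstar)..tstar,
        iteratedFDeriv ℝ (1 + 2) K (x • u) (fun _ => uperp)) = 0 ∧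
    ((-1:ℝ) ^ 2 * tstar * ∫ x in (-tstar)..tstar,
        iteratedFDeriv ℝ (2 + 1) K (x • u) (fun _ => uperp)) = 0 := by
  have hintegral (n : ℕ) : ∫ x in -tstar..tstar, iteratedFDeriv ℝ n K (x • u) (fun _ => uperp)
      = s2 * iteratedDeriv n (fun t => exp (-(φ * t ^ 2))) 0 *
          ∫ x in -tstar..tstar, exp (-(φ * x ^ 2)) := by
    have horth_line (x : ℝ) : ⟪x • u, uperp⟫ = 0 := by rw [real_inner_smul_left, horth, mul_zero]
    simp only [funext hK, iteratedFDeriv_gaussianKernel_apply_orthogonal s2 φ huperp (horth_line _),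
      norm_smul, hu, mul_one, Real.norm_eq_abs, sq_abs, intervalIntegral.integral_mul_const,
      intervalIntegral.integral_const_mul]
    ring
  have hsqrt : √φ ^ 2 = φ := sq_sqrt hφ.le
  refine ⟨?_, ?_, ?_, ?_⟩
  · rw [hintegral, iteratedDeriv_two_mul_exp_neg_mul_sq_zero hφ.le 1,
      intervalIntegral_exp_neg_mul_sq hφ]
    field_simp
    norm_num [Nat.doubleFactorial, hsqrt]
  · rw [hintegral, iteratedDeriv_two_mul_exp_neg_mul_sq_zero hφ.le 2,
      intervalIntegral_exp_neg_mul_sq hφ]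
    field_simp
    norm_num [Nat.doubleFactorial, hsqrt]
    ring
  · rw [hintegral, iteratedDeriv_exp_neg_mul_sq_zero_of_odd hφ.le (by decide)]; ring
  · rw [hintegral, iteratedDeriv_exp_neg_mul_sq_zero_of_odd hφ.le (by decide)]; ring

/-- for the Gaussian kernel `K(Δ) = σ² exp(−φ‖Δ‖²)` in ℝ², the 2×2
cross-covariance matrix of the (gradient, curvature) wombling measures over a
unit-direction segment of length `t*` is
`V_Γ(t*) = 2σ²√π φ^{1/2} t* (2Φ(√(2φ)t*) − 1) · diag(1, 6φ)`, with zero off-diagonal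
entries; entries are `kᵢⱼ(t*,t*) = (−1)ⁱ t* ∫_{−t*}^{t*} aᵢᵀ ∂_s^{i+j}K(xu) aⱼ dx`
(directional contractions of kernel derivatives against the unit normal `u⊥`). -/
theorem gaussian_wombling_covariance_matrix
    (s2 φ tstar : ℝ) (hs2 : 0 < s2) (hφ : 0 < φ) (ht : 0 < tstar)
    (u uperp : EuclideanSpace ℝ (Fin 2)) (hu : ‖u‖ = 1) (huperp : ‖uperp‖ = 1)
    (horth : ⟪u, uperp⟫ = 0)
    (K : EuclideanSpace ℝ (Fin 2) → ℝ)
    (hK : ∀ Δ, K Δ = s2 * Real.exp (-(φ * ‖Δ‖ ^ 2))) :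
    ((-1:ℝ) ^ 1 * tstar * ∫ x in (-tstar)..tstar,
        iteratedFDeriv ℝ (1 + 1) K (x • u) (fun _ => uperp))
      = 2 * s2 * Real.sqrt Real.pi * Real.sqrt φ * tstar *
          (2 * stdNormalCDF (Real.sqrt (2 * φ) * tstar) - 1) ∧
    ((-1:ℝ) ^ 2 * tstar * ∫ x in (-tstar)..tstar,
        iteratedFDeriv ℝ (2 + 2) K (x • u) (fun _ => uperp))
      = 2 * s2 * Real.sqrt Real.pi * Real.sqrt φ * tstar *
          (2 * stdNormalCDF (Real.sqrt (2 * φ) * tstar) - 1) * (6 * φ) ∧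
    ((-1:ℝ) ^ 1 * tstar * ∫ x in (-tstar)..tstar,
        iteratedFDeriv ℝ (1 + 2) K (x • u) (fun _ => uperp)) = 0 ∧
    ((-1:ℝ) ^ 2 * tstar * ∫ x in (-tstar)..tstar,
        iteratedFDeriv ℝ (2 + 1) K (x • u) (fun _ => uperp)) = 0 :=
  gaussian_wombling_covariance_matrix_general s2 φ tstar hφ u uperp hu huperp horth K hK
end

section
/- For the non-separable Gneiting–Matérn kernel with ν = 3/2 in d = 2, K̃(‖Δ‖,|δ|) = (σ²/A_t)(1 + √3 φ_s‖Δ‖/A_t^{1/2}) exp(−√3 φ_s‖Δ‖/A_t^{1/2}) where A_t = φ_t²δ² + 1, the limiting cross-covariance matrix of (Z, ∂_sZ, ∂_tZ, ∂_t∂_sZ) at coincident points is block diagonal: Var(∂_sZ) = 3σ²φ_s² I_d, Var(∂_tZ) = 2σ²φ_t², Var(∂_t∂_sZ) = 12σ²φ_s²φ_t² I_d, and all cross-covariances between distinct derivative components vanish as (‖Δ‖,|δ|) → (0,0). -/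
open scoped RealInnerProductSpace

/-!
For a fixed time lag `δ`, `K (·) δ` is the radial Matérn-3/2 profile
`ψ r = a (1 + c r) e^{-c r}` with `a = σ² / A`, `c = √3 φs / √A`, `A = φt² δ² + 1`, and
`ψ' r = g r * r` with `g r = -a c² e^{-c r}` continuous. A radial function with this kind of
derivative has gradient `g ‖x‖ • x`, which vanishes at `0` and has derivative `g 0 • ⟪·, ·⟫` there,
so the spatial Hessian at the origin is `-3 σ² φs² / A² • ⟪·, ·⟫`. Every quantity is then an even
rational function `C / (φt² δ² + 1) ^ n` of `δ`, whose first derivative vanishes at `0` and whose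
second derivative there is `-2 n C φt²`.
-/

open Real Asymptotics Topology

theorem hasFDerivAt_smul_apply_zero {𝕜 E F : Type*} [NontriviallyNormedField 𝕜]
    [NormedAddCommGroup E] [NormedSpace 𝕜 E] [NormedAddCommGroup F] [NormedSpace 𝕜 F]
    {f : E → 𝕜} (hf : ContinuousAt f 0) (L : E →L[𝕜] F) :
    HasFDerivAt (fun x => f x • L x) (f 0 • L) 0 := by
  rw [hasFDerivAt_iff_isLittleO_nhds_zero]
  have hf' : (fun x => f x - f 0) =o[𝓝 0] (fun _ => (1 : 𝕜)) := by
    rw [isLittleO_one_iff, tendsto_sub_nhds_zero_iff]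
    exact hf
  refine (hf'.smul_isBigO (L.isBigO_id _)).congr' ?_ (by simp)
  filter_upwards with x
  simp [sub_smul]

theorem iteratedDeriv_two_zero_of_hasDerivAt {f g : ℝ → ℝ} (hf : ∀ r, HasDerivAt f (g r * r) r)
    (hg : ContinuousAt g 0) : iteratedDeriv 2 f 0 = g 0 := by
  have hd : deriv f = fun r => g r * r := funext fun r => (hf r).deriv
  have h2 : HasDerivAt (fun r => g r * r) (g 0) 0 := by
    simpa using (hasFDerivAt_smul_apply_zero hg (ContinuousLinearMap.id ℝ ℝ)).hasDerivAt
  rw [iteratedDeriv_succ, iteratedDeriv_one, hd, h2.deriv]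

theorem hasDerivAt_div_mul_sq_add_one_pow (C b : ℝ) (hb : 0 ≤ b) (n : ℕ) (r : ℝ) :
    HasDerivAt (fun r => C / (b * r ^ 2 + 1) ^ n)
      (-(2 * n * C * b) / (b * r ^ 2 + 1) ^ (n + 1) * r) r := by
  have hu : b * r ^ 2 + 1 ≠ 0 := by positivity
  have h := (hasDerivAt_const r C).div ((((hasDerivAt_pow 2 r).const_mul b).add_const 1).pow n)
    (pow_ne_zero n hu)
  refine h.congr_deriv ?_
  rcases n with _ | n
  · simp
  · simp only [Pi.pow_apply, Nat.add_sub_cancel]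
    field_simp
    push_cast
    ring

theorem deriv_div_mul_sq_add_one_pow_zero (C b : ℝ) (hb : 0 ≤ b) (n : ℕ) :
    deriv (fun r => C / (b * r ^ 2 + 1) ^ n) 0 = 0 := by
  simpa using (hasDerivAt_div_mul_sq_add_one_pow C b hb n 0).deriv

theorem iteratedDeriv_two_div_mul_sq_add_one_pow_zero (C b : ℝ) (hb : 0 ≤ b) (n : ℕ) :
    iteratedDeriv 2 (fun r => C / (b * r ^ 2 + 1) ^ n) 0 = -(2 * n * C * b) := by
  have hg : ContinuousAt (fun r : ℝ => -(2 * n * C * b) / (b * r ^ 2 + 1) ^ (n + 1)) 0 :=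
    continuousAt_const.div (by fun_prop) (by simp)
  simpa using iteratedDeriv_two_zero_of_hasDerivAt (hasDerivAt_div_mul_sq_add_one_pow C b hb n) hg

noncomputable def matern32 (a c r : ℝ) : ℝ := a * (1 + c * r) * exp (-(c * r))

theorem hasDerivAt_matern32 (a c r : ℝ) :
    HasDerivAt (matern32 a c) (-(a * c ^ 2) * exp (-(c * r)) * r) r := by
  have hlin : HasDerivAt (fun r => c * r) c r := by simpa using (hasDerivAt_id r).const_mul c
  have hexp : HasDerivAt (fun r => exp (-(c * r))) (exp (-(c * r)) * -c) r := hlin.neg.exp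
  have h := ((hlin.const_add 1).const_mul a).mul hexp
  exact h.congr_deriv (by ring)

section Radial

variable {E : Type*} [NormedAddCommGroup E] [InnerProductSpace ℝ E]

theorem hasFDerivAt_norm_of_ne_zero {x : E} (hx : x ≠ 0) :
    HasFDerivAt (fun y : E => ‖y‖) (‖x‖⁻¹ • innerSL ℝ x) x := by
  have hsqrt : HasDerivAt Real.sqrt (1 / (2 * √(‖x‖ ^ 2))) (‖x‖ ^ 2) :=
    Real.hasDerivAt_sqrt (by positivity)
  have h := hsqrt.comp_hasFDerivAt x (hasStrictFDerivAt_norm_sq x).hasFDerivAt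
  rw [show (Real.sqrt ∘ fun y : E => ‖y‖ ^ 2) = fun y => ‖y‖ from
    funext fun y => Real.sqrt_sq (norm_nonneg y)] at h
  refine h.congr_fderiv ?_
  ext y
  simp [Real.sqrt_sq (norm_nonneg x)]
  field_simp

theorem hasFDerivAt_radial_zero {ψ : ℝ → ℝ} (hψ : HasDerivAt ψ 0 0) :
    HasFDerivAt (fun y : E => ψ ‖y‖) (0 : E →L[ℝ] ℝ) 0 := by
  rw [hasDerivAt_iff_isLittleO_nhds_zero] at hψ
  rw [hasFDerivAt_iff_isLittleO_nhds_zero, ← isLittleO_norm_right]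
  simpa [Function.comp_def] using hψ.comp_tendsto tendsto_norm_zero

theorem hasFDerivAt_radial {ψ g : ℝ → ℝ} (hψ : ∀ r, 0 ≤ r → HasDerivAt ψ (g r * r) r) (x : E) :
    HasFDerivAt (fun y : E => ψ ‖y‖) (g ‖x‖ • innerSL ℝ x) x := by
  rcases eq_or_ne x 0 with rfl | hx
  · simpa using hasFDerivAt_radial_zero (E := E) (by simpa using hψ 0 le_rfl)
  · refine ((hψ ‖x‖ (norm_nonneg x)).comp_hasFDerivAt x
      (hasFDerivAt_norm_of_ne_zero hx)).congr_fderiv ?_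
    have : ‖x‖ ≠ 0 := norm_ne_zero_iff.2 hx
    rw [smul_smul, mul_assoc, mul_inv_cancel₀ this, mul_one]

theorem iteratedFDeriv_two_radial_zero {ψ g : ℝ → ℝ} (hψ : ∀ r, 0 ≤ r → HasDerivAt ψ (g r * r) r)
    (hg : ContinuousAt g 0) (v w : E) :
    iteratedFDeriv ℝ 2 (fun y : E => ψ ‖y‖) 0 ![v, w] = g 0 * ⟪v, w⟫ := by
  have hd : fderiv ℝ (fun y : E => ψ ‖y‖) = fun x => g ‖x‖ • innerSL ℝ x :=
    funext fun x => (hasFDerivAt_radial hψ x).fderiv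
  have hgn : ContinuousAt (fun x : E => g ‖x‖) 0 :=
    hg.comp_of_eq continuous_norm.continuousAt norm_zero
  rw [iteratedFDeriv_two_apply, hd, (hasFDerivAt_smul_apply_zero hgn (innerSL ℝ)).fderiv]
  simp only [FunLike.coe_smul, Pi.smul_apply, norm_zero, smul_eq_mul]
  rfl

theorem fderiv_matern32_norm_zero (a c : ℝ) : fderiv ℝ (fun x : E => matern32 a c ‖x‖) 0 = 0 :=
  (hasFDerivAt_radial_zero (by simpa using hasDerivAt_matern32 a c 0)).fderiv

theorem iteratedFDeriv_two_matern32_norm_zero (a c : ℝ) (v w : E) :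
    iteratedFDeriv ℝ 2 (fun x : E => matern32 a c ‖x‖) 0 ![v, w] = -(a * c ^ 2) * ⟪v, w⟫ := by
  have hg : ContinuousAt (fun r => -(a * c ^ 2) * exp (-(c * r))) 0 := by fun_prop
  simpa using iteratedFDeriv_two_radial_zero (fun r _ => hasDerivAt_matern32 a c r) hg v w

end Radial

theorem gneiting_matern32_derivative_cross_covariance_general
    (σ φs φt : ℝ)
    (K : EuclideanSpace ℝ (Fin 2) → ℝ → ℝ)
    (hK : ∀ (Δ : EuclideanSpace ℝ (Fin 2)) (δ : ℝ),
      K Δ δ = σ ^ 2 / (φt ^ 2 * δ ^ 2 + 1) *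
        (1 + Real.sqrt 3 * φs * ‖Δ‖ / Real.sqrt (φt ^ 2 * δ ^ 2 + 1)) *
        Real.exp (-(Real.sqrt 3 * φs * ‖Δ‖ / Real.sqrt (φt ^ 2 * δ ^ 2 + 1)))) :
    (∀ v w : EuclideanSpace ℝ (Fin 2),
        -(iteratedFDeriv ℝ 2 (fun Δ => K Δ 0) 0 ![v, w]) = 3 * σ ^ 2 * φs ^ 2 * ⟪v, w⟫) ∧
    (-(iteratedDeriv 2 (fun δ => K 0 δ) 0) = 2 * σ ^ 2 * φt ^ 2) ∧
    (∀ v w : EuclideanSpace ℝ (Fin 2),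
        iteratedDeriv 2 (fun δ => iteratedFDeriv ℝ 2 (fun Δ => K Δ δ) 0 ![v, w]) 0
          = 12 * σ ^ 2 * φs ^ 2 * φt ^ 2 * ⟪v, w⟫) ∧
    (∀ v : EuclideanSpace ℝ (Fin 2), fderiv ℝ (fun Δ => K Δ 0) 0 v = 0) ∧
    (deriv (fun δ => K 0 δ) 0 = 0) ∧
    (∀ v : EuclideanSpace ℝ (Fin 2),
        deriv (fun δ => fderiv ℝ (fun Δ => K Δ δ) 0 v) 0 = 0) ∧
    (∀ v w : EuclideanSpace ℝ (Fin 2),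
        deriv (fun δ => iteratedFDeriv ℝ 2 (fun Δ => K Δ δ) 0 ![v, w]) 0 = 0) ∧
    (∀ v : EuclideanSpace ℝ (Fin 2),
        iteratedDeriv 2 (fun δ => fderiv ℝ (fun Δ => K Δ δ) 0 v) 0 = 0) := by
  have hK_space : ∀ δ, (fun Δ => K Δ δ) = fun Δ => matern32 (σ ^ 2 / (φt ^ 2 * δ ^ 2 + 1))
      (√3 * φs / √(φt ^ 2 * δ ^ 2 + 1)) ‖Δ‖ := by
    intro δ; funext Δ; rw [hK, matern32]; ring_nf
  have hK_time : (fun δ => K 0 δ) = fun δ => σ ^ 2 / (φt ^ 2 * δ ^ 2 + 1) ^ 1 := by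
    funext δ; simp [hK]
  have hspace1 : ∀ δ, fderiv ℝ (fun Δ => K Δ δ) 0 = 0 := fun δ => by
    rw [hK_space]; exact fderiv_matern32_norm_zero _ _
  have hspace2 : ∀ v w, (fun δ => iteratedFDeriv ℝ 2 (fun Δ => K Δ δ) 0 ![v, w])
      = fun δ => -(3 * σ ^ 2 * φs ^ 2 * ⟪v, w⟫) / (φt ^ 2 * δ ^ 2 + 1) ^ 2 := by
    intro v w; funext δ
    rw [hK_space, iteratedFDeriv_two_matern32_norm_zero, div_pow, mul_pow, sq_sqrt (by norm_num),
      sq_sqrt (by positivity)]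
    field_simp
  refine ⟨fun v w => ?_, ?_, fun v w => ?_, fun v => ?_, ?_, fun v => ?_, fun v w => ?_,
    fun v => ?_⟩
  · have h0 := congrFun (hspace2 v w) 0
    norm_num at h0
    rw [h0, neg_neg]
  · rw [hK_time, iteratedDeriv_two_div_mul_sq_add_one_pow_zero _ _ (sq_nonneg φt)]; ring
  · rw [hspace2, iteratedDeriv_two_div_mul_sq_add_one_pow_zero _ _ (sq_nonneg φt)]; ring
  · simp [hspace1]
  · rw [hK_time, deriv_div_mul_sq_add_one_pow_zero _ _ (sq_nonneg φt)]
  · simp [hspace1]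
  · rw [hspace2, deriv_div_mul_sq_add_one_pow_zero _ _ (sq_nonneg φt)]
  · simp [hspace1]

/-- for the non-separable Gneiting–Matérn kernel with ν = 3/2 in d = 2,
`K̃ = (σ²/A_t)(1 + √3φ_s‖Δ‖/A_t^{1/2})exp(−√3φ_s‖Δ‖/A_t^{1/2})`, `A_t = φ_t²δ²+1`,
the limiting cross-covariance of `(Z, ∂_sZ, ∂_tZ, ∂_t∂_sZ)` at coincident points is block
diagonal: `Var(∂_sZ) = −∂_s²K(0,0) = 3σ²φ_s² I`, `Var(∂_tZ) = −∂_t²K(0,0) = 2σ²φ_t²`,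
`Var(∂_t∂_sZ) = ∂_t²∂_s²K(0,0) = 12σ²φ_s²φ_t² I`, and all cross-covariances between
distinct components (odd-order mixed derivatives of `K` at the origin) vanish. -/
theorem gneiting_matern32_derivative_cross_covariance
    (σ φs φt : ℝ) (hσ : 0 < σ) (hφs : 0 < φs) (hφt : 0 < φt)
    (K : EuclideanSpace ℝ (Fin 2) → ℝ → ℝ)
    (hK : ∀ (Δ : EuclideanSpace ℝ (Fin 2)) (δ : ℝ),
      K Δ δ = σ ^ 2 / (φt ^ 2 * δ ^ 2 + 1) *
        (1 + Real.sqrt 3 * φs * ‖Δ‖ / Real.sqrt (φt ^ 2 * δ ^ 2 + 1)) *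
        Real.exp (-(Real.sqrt 3 * φs * ‖Δ‖ / Real.sqrt (φt ^ 2 * δ ^ 2 + 1)))) :
    (∀ v w : EuclideanSpace ℝ (Fin 2),
        -(iteratedFDeriv ℝ 2 (fun Δ => K Δ 0) 0 ![v, w]) = 3 * σ ^ 2 * φs ^ 2 * ⟪v, w⟫) ∧
    (-(iteratedDeriv 2 (fun δ => K 0 δ) 0) = 2 * σ ^ 2 * φt ^ 2) ∧
    (∀ v w : EuclideanSpace ℝ (Fin 2),
        iteratedDeriv 2 (fun δ => iteratedFDeriv ℝ 2 (fun Δ => K Δ δ) 0 ![v, w]) 0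
          = 12 * σ ^ 2 * φs ^ 2 * φt ^ 2 * ⟪v, w⟫) ∧
    (∀ v : EuclideanSpace ℝ (Fin 2), fderiv ℝ (fun Δ => K Δ 0) 0 v = 0) ∧
    (deriv (fun δ => K 0 δ) 0 = 0) ∧
    (∀ v : EuclideanSpace ℝ (Fin 2),
        deriv (fun δ => fderiv ℝ (fun Δ => K Δ δ) 0 v) 0 = 0) ∧
    (∀ v w : EuclideanSpace ℝ (Fin 2),
        deriv (fun δ => iteratedFDeriv ℝ 2 (fun Δ => K Δ δ) 0 ![v, w]) 0 = 0) ∧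
    (∀ v : EuclideanSpace ℝ (Fin 2),
        iteratedDeriv 2 (fun δ => fderiv ℝ (fun Δ => K Δ δ) 0 v) 0 = 0) :=
  gneiting_matern32_derivative_cross_covariance_general σ φs φt K hK
end
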